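/- arXiv:1404.5449 — 3 statements merged into one kernel-verified Lean document; each statement's English description precedes it below -/
import Mathlib

section
/- For every y ∈ A, the limit as x → y (x ∈ A, x ≠ y) of −log|x − y| − G_A(x, y) exists and equals R_A(y) := −(log|y| − log b)²/log(a/b) − log b + Σ_{m=1}^∞ (1/m)·(|y|^{2m} − 2a^{2m} + (ab)^{2m}|y|^{−2m})/(b^{2m} − a^{2m}). -/
/-!
Subtracting `-log|x - y|` removes the only singular part of `G_A(x, y)`: what remains is
`-A_0(y) - B_0(y) log|x|` plus the Fourier series. Since `|A_m(y)| ≲ (|y|/b²)^m` and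
`|B_m(y)| ≲ (a²/|y|)^m`, the series is dominated by geometric series, uniformly on every closed
annulus inside `a²/|y| < |x| < b²/|y|`, which contains the pole. So the remainder is continuous at
`x = y`, and its value there is `R_A(y)`.
-/

/-- The coefficient `A_0(y)` of the Green function of the annulus `{a < |x| < b}`,
as a function of `s = |y|`. -/
noncomputable def A0 (a b s : ℝ) : ℝ := Real.log b * (Real.log (a / s) / Real.log (a / b))

/-- The coefficient `B_0(y)`, as a function of `s = |y|`. -/
noncomputable def B0 (a b s : ℝ) : ℝ := Real.log (s / b) / Real.log (a / b)

/-- The Fourier coefficient `A_m(y)`, as a function of `s = |y|`. -/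
noncomputable def Acoef (a b s : ℝ) (m : ℕ) : ℝ :=
  (s ^ m - (a ^ 2 / s) ^ m) / (b ^ (2 * m) - a ^ (2 * m))

/-- The Fourier coefficient `B_m(y)`, as a function of `s = |y|`. -/
noncomputable def Bcoef (a b s : ℝ) (m : ℕ) : ℝ :=
  a ^ (2 * m) * ((b ^ 2 / s) ^ m - s ^ m) / (b ^ (2 * m) - a ^ (2 * m))

/-- The Green function `G_A(x, y)` of the annulus `A = {a < |x| < b}`, the plane being
identified with `ℂ`; the pole is `y = s e^{iα}` and `x ∈ ℂ`.  For `x = r e^{iθ}` one has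
`|x|^m cos m(θ - α) = Re (x^m e^{-imα})` and `|x|^{-m} cos m(θ - α) = Re (x^{-m} e^{imα})`,
so this is the series `-log|x-y| + A_0(y) + B_0(y) log|x|
- Σ_{m≥1} (1/m)(A_m(y)|x|^m + B_m(y)|x|^{-m}) cos m(θ - α)`. -/
noncomputable def GA (a b s α : ℝ) (x : ℂ) : ℝ :=
  -Real.log (‖x - s * Complex.exp (α * Complex.I)‖)
  + A0 a b s + B0 a b s * Real.log ‖x‖
  - ∑' m : ℕ, (1 / (m + 1 : ℝ)) *
      (Acoef a b s (m + 1) * (x ^ (m + 1) * Complex.exp (-((m + 1 : ℝ) * α) * Complex.I)).re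
      + Bcoef a b s (m + 1) * (x ^ (-(m + 1 : ℤ)) * Complex.exp (((m + 1 : ℝ) * α) * Complex.I)).re)

/-- The Robin function of the annulus `A = {a < |x| < b}` at a point of modulus `s`. -/
noncomputable def RA (a b s : ℝ) : ℝ :=
  -(Real.log s - Real.log b) ^ 2 / Real.log (a / b) - Real.log b
  + ∑' m : ℕ, (1 / (m + 1 : ℝ)) *
      ((s ^ (2 * (m + 1)) - 2 * a ^ (2 * (m + 1)) + (a * b) ^ (2 * (m + 1)) *
        (s ^ (2 * (m + 1)))⁻¹) / (b ^ (2 * (m + 1)) - a ^ (2 * (m + 1))))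

open Filter Topology

noncomputable def greenFourierTerm (a b s α : ℝ) (m : ℕ) (x : ℂ) : ℝ :=
  (1 / (m + 1 : ℝ)) *
    (Acoef a b s (m + 1) * (x ^ (m + 1) * Complex.exp (-((m + 1 : ℝ) * α) * Complex.I)).re
      + Bcoef a b s (m + 1)
        * (x ^ (-(m + 1 : ℤ)) * Complex.exp (((m + 1 : ℝ) * α) * Complex.I)).re)

noncomputable def greenRegularPart (a b s α : ℝ) (x : ℂ) : ℝ :=
  -A0 a b s - B0 a b s * Real.log ‖x‖ + ∑' m, greenFourierTerm a b s α m x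

lemma neg_log_sub_GA (a b s α : ℝ) (x : ℂ) :
    -Real.log ‖x - s * Complex.exp (α * Complex.I)‖ - GA a b s α x
      = greenRegularPart a b s α x := by
  simp only [GA, greenRegularPart, greenFourierTerm]
  ring

def annulus (r R : ℝ) : Set ℂ := {z | r < ‖z‖ ∧ ‖z‖ < R}

lemma isOpen_annulus (r R : ℝ) : IsOpen (annulus r R) :=
  (isOpen_lt continuous_const continuous_norm).inter (isOpen_lt continuous_norm continuous_const)

lemma abs_re_mul_exp_le (z w : ℂ) (hw : w.re = 0) : |(z * Complex.exp w).re| ≤ ‖z‖ :=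
  calc |(z * Complex.exp w).re| ≤ ‖z * Complex.exp w‖ := Complex.abs_re_le_norm _
    _ = ‖z‖ := by rw [norm_mul, Complex.norm_exp, hw, Real.exp_zero, mul_one]

lemma abs_greenFourierTerm_le (a b s α : ℝ) (m : ℕ) (x : ℂ) :
    |greenFourierTerm a b s α m x|
      ≤ |Acoef a b s (m + 1)| * ‖x‖ ^ (m + 1) + |Bcoef a b s (m + 1)| / ‖x‖ ^ (m + 1) := by
  have hpos : |(x ^ (m + 1) * Complex.exp (-((m + 1 : ℝ) * α) * Complex.I)).re|
      ≤ ‖x‖ ^ (m + 1) := by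
    simpa only [norm_pow] using
      abs_re_mul_exp_le (x ^ (m + 1)) (-((m + 1 : ℝ) * α) * Complex.I) (by simp)
  have hneg : |(x ^ (-(m + 1 : ℤ)) * Complex.exp (((m + 1 : ℝ) * α) * Complex.I)).re|
      ≤ (‖x‖ ^ (m + 1))⁻¹ := by
    simpa only [norm_zpow, zpow_neg, norm_inv, norm_pow, ← Nat.cast_succ, zpow_natCast]
      using abs_re_mul_exp_le (x ^ (-(m + 1 : ℤ))) (((m + 1 : ℝ) * α) * Complex.I) (by simp)
  have hweight : 1 / (m + 1 : ℝ) ≤ 1 := div_le_one_of_le₀ (by simp) (by positivity)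
  rw [greenFourierTerm, abs_mul, abs_of_pos (by positivity), div_eq_mul_inv _ (‖x‖ ^ (m + 1))]
  refine (mul_le_of_le_one_left (abs_nonneg _) hweight).trans ((abs_add_le _ _).trans ?_)
  rw [abs_mul, abs_mul]
  gcongr

lemma pow_mul_sub_le_pow_succ_sub_pow_succ {R : Type*} [CommRing R] [LinearOrder R]
    [IsStrictOrderedRing R] {u v : R} (hu : 0 ≤ u) (huv : u ≤ v) (n : ℕ) :
    v ^ n * (v - u) ≤ v ^ (n + 1) - u ^ (n + 1) := by
  have hdiff : v ^ (n + 1) - u ^ (n + 1) - v ^ n * (v - u) = u * (v ^ n - u ^ n) := by ring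
  have := mul_nonneg hu (sub_nonneg.2 (pow_le_pow_left₀ hu huv n))
  linarith

section Coefficients

variable {a b s : ℝ}

lemma pow_mul_sq_sub_sq_le_pow_sub_pow (ha : 0 ≤ a) (hab : a ≤ b) (m : ℕ) :
    b ^ (2 * m) * (b ^ 2 - a ^ 2) ≤ b ^ (2 * (m + 1)) - a ^ (2 * (m + 1)) := by
  simpa only [pow_mul] using
    pow_mul_sub_le_pow_succ_sub_pow_succ (sq_nonneg a) (pow_le_pow_left₀ ha hab 2) m

lemma abs_Acoef_mul_pow_le (ha : 0 < a) (hab : a < b) (has : a ≤ s) {r : ℝ} (hr : 0 ≤ r)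
    (m : ℕ) :
    |Acoef a b s (m + 1)| * r ^ (m + 1)
      ≤ b ^ 2 / (b ^ 2 - a ^ 2) * (s * r / b ^ 2) ^ (m + 1) := by
  have hs : 0 < s := ha.trans_le has
  have hb : 0 < b := ha.trans hab
  have hba : 0 < b ^ 2 - a ^ 2 := by nlinarith
  have hD := pow_mul_sq_sub_sq_le_pow_sub_pow ha.le hab.le m
  have hDpos : 0 < b ^ (2 * m) * (b ^ 2 - a ^ 2) := by positivity
  have hpow : (a ^ 2 / s) ^ (m + 1) ≤ s ^ (m + 1) :=
    pow_le_pow_left₀ (by positivity) ((div_le_iff₀ hs).2 (by nlinarith)) _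
  have hA : |Acoef a b s (m + 1)| ≤ s ^ (m + 1) / (b ^ (2 * m) * (b ^ 2 - a ^ 2)) := by
    rw [Acoef, abs_div, abs_of_nonneg (sub_nonneg.2 hpow), abs_of_pos (hDpos.trans_le hD)]
    exact div_le_div₀ (by positivity) (sub_le_self _ (by positivity)) hDpos hD
  calc |Acoef a b s (m + 1)| * r ^ (m + 1)
      ≤ s ^ (m + 1) / (b ^ (2 * m) * (b ^ 2 - a ^ 2)) * r ^ (m + 1) := by gcongr
    _ = b ^ 2 / (b ^ 2 - a ^ 2) * (s * r / b ^ 2) ^ (m + 1) := by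
      rw [div_pow, mul_pow, show (b ^ 2) ^ (m + 1) = b ^ (2 * m) * b ^ 2 by ring]
      field_simp

lemma abs_Bcoef_div_pow_le (ha : 0 < a) (hab : a < b) (hsb : s ≤ b) (hs : 0 < s) {r : ℝ}
    (hr : 0 < r) (m : ℕ) :
    |Bcoef a b s (m + 1)| / r ^ (m + 1)
      ≤ b ^ 2 / (b ^ 2 - a ^ 2) * (a ^ 2 / (s * r)) ^ (m + 1) := by
  have hb : 0 < b := ha.trans hab
  have hba : 0 < b ^ 2 - a ^ 2 := by nlinarith
  have hD := pow_mul_sq_sub_sq_le_pow_sub_pow ha.le hab.le m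
  have hDpos : 0 < b ^ (2 * m) * (b ^ 2 - a ^ 2) := by positivity
  have hpow : s ^ (m + 1) ≤ (b ^ 2 / s) ^ (m + 1) :=
    pow_le_pow_left₀ hs.le ((le_div_iff₀ hs).2 (by nlinarith)) _
  have hnum : a ^ (2 * (m + 1)) * ((b ^ 2 / s) ^ (m + 1) - s ^ (m + 1))
      ≤ a ^ (2 * (m + 1)) * (b ^ 2 / s) ^ (m + 1) :=
    mul_le_mul_of_nonneg_left (sub_le_self _ (by positivity)) (by positivity)
  have hB : |Bcoef a b s (m + 1)|
      ≤ a ^ (2 * (m + 1)) * (b ^ 2 / s) ^ (m + 1) / (b ^ (2 * m) * (b ^ 2 - a ^ 2)) := by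
    rw [Bcoef, abs_div, abs_of_nonneg (by have := sub_nonneg.2 hpow; positivity),
      abs_of_pos (hDpos.trans_le hD)]
    exact div_le_div₀ (by positivity) hnum hDpos hD
  calc |Bcoef a b s (m + 1)| / r ^ (m + 1)
      ≤ a ^ (2 * (m + 1)) * (b ^ 2 / s) ^ (m + 1) / (b ^ (2 * m) * (b ^ 2 - a ^ 2))
        / r ^ (m + 1) := by gcongr
    _ = b ^ 2 / (b ^ 2 - a ^ 2) * (a ^ 2 / (s * r)) ^ (m + 1) := by
      rw [div_pow, div_pow, mul_pow, show (b ^ 2) ^ (m + 1) = b ^ (2 * m) * b ^ 2 by ring]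
      field_simp
      ring

lemma abs_greenFourierTerm_le_geometric (α : ℝ) (ha : 0 < a) (hab : a < b) (has : a ≤ s)
    (hsb : s ≤ b) {r₁ r₂ : ℝ} (hr₁ : 0 < r₁) {x : ℂ} (hx₁ : r₁ ≤ ‖x‖) (hx₂ : ‖x‖ ≤ r₂)
    (m : ℕ) :
    |greenFourierTerm a b s α m x|
      ≤ b ^ 2 / (b ^ 2 - a ^ 2) * (s * r₂ / b ^ 2) ^ (m + 1)
        + b ^ 2 / (b ^ 2 - a ^ 2) * (a ^ 2 / (s * r₁)) ^ (m + 1) := by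
  have hx : 0 < ‖x‖ := hr₁.trans_le hx₁
  calc |greenFourierTerm a b s α m x|
      ≤ |Acoef a b s (m + 1)| * ‖x‖ ^ (m + 1) + |Bcoef a b s (m + 1)| / ‖x‖ ^ (m + 1) :=
        abs_greenFourierTerm_le a b s α m x
    _ ≤ |Acoef a b s (m + 1)| * r₂ ^ (m + 1) + |Bcoef a b s (m + 1)| / r₁ ^ (m + 1) := by
        gcongr
    _ ≤ _ := add_le_add (abs_Acoef_mul_pow_le ha hab has (hx.le.trans hx₂) m)
        (abs_Bcoef_div_pow_le ha hab hsb (ha.trans_le has) hr₁ m)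

end Coefficients

lemma continuousAt_greenFourierTerm (a b s α : ℝ) (m : ℕ) {x : ℂ} (hx : x ≠ 0) :
    ContinuousAt (greenFourierTerm a b s α m) x := by
  have hre {f : ℂ → ℂ} (hf : ContinuousAt f x) : ContinuousAt (fun z => (f z).re) x :=
    Complex.continuous_re.continuousAt.comp hf
  exact continuousAt_const.mul ((continuousAt_const.mul (hre (by fun_prop))).add
    (continuousAt_const.mul (hre ((continuousAt_zpow₀ x _ (Or.inl hx)).mul continuousAt_const))))

lemma summable_geometric_succ_of_lt_one {q : ℝ} (hq₀ : 0 ≤ q) (hq₁ : q < 1) :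
    Summable fun m : ℕ => q ^ (m + 1) :=
  (summable_nat_add_iff 1).2 (summable_geometric_of_lt_one hq₀ hq₁)

lemma continuousOn_tsum_greenFourierTerm (α : ℝ) {a b s : ℝ} (ha : 0 < a) (hab : a < b)
    (has : a ≤ s) (hsb : s ≤ b) :
    ContinuousOn (fun x => ∑' m, greenFourierTerm a b s α m x)
      (annulus (a ^ 2 / s) (b ^ 2 / s)) := by
  intro x ⟨hx₁, hx₂⟩
  have hs : 0 < s := ha.trans_le has
  obtain ⟨r₁, hr₁, hr₁x⟩ := exists_between hx₁
  obtain ⟨r₂, hxr₂, hr₂⟩ := exists_between hx₂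
  have hr₁pos : 0 < r₁ := (div_pos (pow_pos ha 2) hs).trans hr₁
  have hq₁ : s * r₂ / b ^ 2 < 1 := by
    rw [div_lt_one (pow_pos (ha.trans hab) 2)]
    rwa [lt_div_iff₀ hs, mul_comm] at hr₂
  have hq₂ : a ^ 2 / (s * r₁) < 1 := by
    rw [div_lt_one (mul_pos hs hr₁pos)]
    rwa [div_lt_iff₀ hs, mul_comm] at hr₁
  have hr₂pos : 0 < r₂ := hr₁pos.trans (hr₁x.trans hxr₂)
  have hsum := ((summable_geometric_succ_of_lt_one (by positivity) hq₁).mul_left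
    (b ^ 2 / (b ^ 2 - a ^ 2))).add
    ((summable_geometric_succ_of_lt_one (by positivity) hq₂).mul_left (b ^ 2 / (b ^ 2 - a ^ 2)))
  have hK : {z : ℂ | r₁ ≤ ‖z‖ ∧ ‖z‖ ≤ r₂} ∈ 𝓝 x := by
    exact mem_of_superset ((isOpen_annulus r₁ r₂).mem_nhds ⟨hr₁x, hxr₂⟩)
      fun z hz => ⟨hz.1.le, hz.2.le⟩
  refine (ContinuousOn.continuousAt ?_ hK).continuousWithinAt
  refine continuousOn_tsum (fun m z hz => ?_) hsum fun m z hz => ?_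
  · exact (continuousAt_greenFourierTerm a b s α m
      (norm_pos_iff.1 (hr₁pos.trans_le hz.1))).continuousWithinAt
  · exact abs_greenFourierTerm_le_geometric α ha hab has hsb hr₁pos hz.1 hz.2 m

lemma norm_ofReal_mul_exp_mul_I {s : ℝ} (hs : 0 ≤ s) (α : ℝ) :
    ‖(s : ℂ) * Complex.exp (α * Complex.I)‖ = s := by
  simp [hs]

lemma greenFourierTerm_pole (a b α : ℝ) {s : ℝ} (hs : s ≠ 0) (m : ℕ) :
    greenFourierTerm a b s α m (s * Complex.exp (α * Complex.I))
      = 1 / (m + 1 : ℝ) * ((s ^ (2 * (m + 1)) - 2 * a ^ (2 * (m + 1))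
        + (a * b) ^ (2 * (m + 1)) * (s ^ (2 * (m + 1)))⁻¹)
        / (b ^ (2 * (m + 1)) - a ^ (2 * (m + 1)))) := by
  have hpow : ((s : ℂ) * Complex.exp (α * Complex.I)) ^ (m + 1)
      = (s : ℂ) ^ (m + 1) * Complex.exp (((m + 1 : ℝ) * α) * Complex.I) := by
    rw [mul_pow, ← Complex.exp_nat_mul]
    push_cast
    ring_nf
  have hpos : (((s : ℂ) * Complex.exp (α * Complex.I)) ^ (m + 1)
      * Complex.exp (-((m + 1 : ℝ) * α) * Complex.I)).re = s ^ (m + 1) := by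
    rw [hpow, mul_assoc, ← Complex.exp_add, neg_mul, add_neg_cancel, Complex.exp_zero, mul_one]
    norm_cast
  have hneg : (((s : ℂ) * Complex.exp (α * Complex.I)) ^ (-(m + 1 : ℤ))
      * Complex.exp (((m + 1 : ℝ) * α) * Complex.I)).re = (s ^ (m + 1))⁻¹ := by
    rw [zpow_neg, ← Nat.cast_succ, zpow_natCast, hpow, mul_inv, mul_assoc,
      inv_mul_cancel₀ (Complex.exp_ne_zero _), mul_one]
    norm_cast
  rw [greenFourierTerm, hpos, hneg]
  congr 1
  rw [Acoef, Bcoef, div_mul_eq_mul_div, div_mul_eq_mul_div, ← add_div, div_pow, div_pow]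
  congr 1
  field_simp
  ring

lemma neg_A0_sub_B0_mul_log {a b s : ℝ} (ha : 0 < a) (hab : a < b) (hs : 0 < s) :
    -A0 a b s - B0 a b s * Real.log s
      = -(Real.log s - Real.log b) ^ 2 / Real.log (a / b) - Real.log b := by
  have hb : 0 < b := ha.trans hab
  have hL : Real.log a - Real.log b ≠ 0 := sub_ne_zero.2 (Real.log_lt_log ha hab).ne
  rw [A0, B0, Real.log_div ha.ne' hs.ne', Real.log_div hs.ne' hb.ne', Real.log_div ha.ne' hb.ne']
  field_simp
  ring

lemma continuousOn_greenRegularPart (α : ℝ) {a b s : ℝ} (ha : 0 < a) (hab : a < b)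
    (has : a ≤ s) (hsb : s ≤ b) :
    ContinuousOn (greenRegularPart a b s α) (annulus (a ^ 2 / s) (b ^ 2 / s)) := by
  have hlog : ContinuousOn (fun x : ℂ => Real.log ‖x‖) (annulus (a ^ 2 / s) (b ^ 2 / s)) :=
    Real.continuousOn_log.comp continuous_norm.continuousOn fun x hx =>
      (div_pos (pow_pos ha 2) (ha.trans_le has)).trans hx.1 |>.ne'
  exact (continuousOn_const.sub (continuousOn_const.mul hlog)).add
    (continuousOn_tsum_greenFourierTerm α ha hab has hsb)

lemma greenRegularPart_pole (α : ℝ) {a b s : ℝ} (ha : 0 < a) (hab : a < b) (hs : 0 < s) :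
    greenRegularPart a b s α (s * Complex.exp (α * Complex.I)) = RA a b s := by
  rw [greenRegularPart, norm_ofReal_mul_exp_mul_I hs.le, RA, neg_A0_sub_B0_mul_log ha hab hs,
    tsum_congr (greenFourierTerm_pole a b α hs.ne')]

/-- For every `y = s e^{iα}` in the annulus `A = {a < |x| < b}`, the limit as `x → y`
(`x ∈ A`, `x ≠ y`) of `-log|x - y| - G_A(x, y)` exists and equals the Robin function
`R_A(y)`. -/
theorem robin_function_limit (a b s α : ℝ) (ha : 0 < a) (hab : a < b)
    (hs₁ : a < s) (hs₂ : s < b) :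
    Filter.Tendsto
      (fun x : ℂ => -Real.log (‖x - s * Complex.exp (α * Complex.I)‖)
        - GA a b s α x)
      (nhdsWithin (s * Complex.exp (α * Complex.I))
        ({x : ℂ | a < ‖x‖ ∧ ‖x‖ < b} \ {s * Complex.exp (α * Complex.I)}))
      (nhds (RA a b s)) := by
  have hs : 0 < s := ha.trans hs₁
  have hpole : (s : ℂ) * Complex.exp (α * Complex.I) ∈ annulus (a ^ 2 / s) (b ^ 2 / s) := by
    refine ⟨?_, ?_⟩ <;> rw [norm_ofReal_mul_exp_mul_I hs.le]
    exacts [(div_lt_iff₀ hs).2 (by nlinarith), (lt_div_iff₀ hs).2 (by nlinarith)]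
  simp_rw [neg_log_sub_GA, ← greenRegularPart_pole α ha hab hs]
  exact ((continuousOn_greenRegularPart α ha hab hs₁.le hs₂.le).continuousAt
    ((isOpen_annulus _ _).mem_nhds hpole)).continuousWithinAt
end

section
/- Let 0 < a < b and let P₁, P₂ ∈ A with P₁ ≠ P₂ and polar coordinates P_i = (r_i cos θ_i, r_i sin θ_i), a < r_i < b. Suppose the two equations hold: (i) −B_0(P₁) + Σ_{m=1}^∞ (r₁^{2m} − (ab)^{2m} r₁^{−2m})/(b^{2m} − a^{2m}) = −((P₁ − P₂)·P₁)/|P₁ − P₂|² + B_0(P₂) − Σ_{m=1}^∞ (A_m(P₂) r₁^m − B_m(P₂) r₁^{−m}) cos m(θ₁ − θ₂); and (ii) −B_0(P₂) + Σ_{m=1}^∞ (r₂^{2m} − (ab)^{2m} r₂^{−2m})/(b^{2m} − a^{2m}) = −((P₂ − P₁)·P₂)/|P₂ − P₁|² + B_0(P₁) − Σ_{m=1}^∞ (A_m(P₁) r₂^m − B_m(P₁) r₂^{−m}) cos m(θ₁ − θ₂). Then r₁ = r₂. -/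
open Real

lemma sub_mul_pow_sub_pow_pos {x y : ℝ} (hx : 0 ≤ x) (hy : 0 ≤ y) (hxy : x ≠ y) {n : ℕ}
    (hn : n ≠ 0) : 0 < (x - y) * (x ^ n - y ^ n) := by
  rcases hxy.lt_or_gt with h | h
  · exact mul_pos_of_neg_of_neg (sub_neg.2 h) (sub_neg.2 (pow_lt_pow_left₀ h hx hn))
  · exact mul_pos (sub_pos.2 h) (sub_pos.2 (pow_lt_pow_left₀ h hy hn))

lemma summable_pow_div_pow_sub_pow {x A B : ℝ} (hxB : |x| < B) (hA : 0 ≤ A) (hAB : A < B) :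
    Summable fun m : ℕ => x ^ (m + 1) / (B ^ (m + 1) - A ^ (m + 1)) := by
  have hB : 0 < B := hA.trans_lt hAB
  have hBA : 0 < B - A := sub_pos.2 hAB
  have hgeom := (summable_geometric_of_lt_one (by positivity) ((div_lt_one hB).2 hxB)).mul_left
    (|x| / (B - A))
  refine hgeom.of_norm_bounded fun m => ?_
  have hden : B ^ m * (B - A) ≤ B ^ (m + 1) - A ^ (m + 1) := by
    have := pow_le_pow_left₀ hA hAB.le m
    rw [pow_succ, pow_succ]
    nlinarith
  have hden_pos : 0 < B ^ (m + 1) - A ^ (m + 1) :=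
    (by positivity : 0 < B ^ m * (B - A)).trans_le hden
  calc ‖x ^ (m + 1) / (B ^ (m + 1) - A ^ (m + 1))‖
      = |x| ^ (m + 1) / (B ^ (m + 1) - A ^ (m + 1)) := by
        rw [norm_div, norm_pow, Real.norm_eq_abs, Real.norm_of_nonneg hden_pos.le]
    _ ≤ |x| ^ (m + 1) / (B ^ m * (B - A)) :=
        div_le_div_of_nonneg_left (by positivity) (by positivity) hden
    _ = |x| / (B - A) * (|x| / B) ^ m := by
        rw [div_pow, pow_succ]
        field_simp

lemma Summable.mul_cos {f : ℕ → ℝ} (hf : Summable f) (g : ℕ → ℝ) :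
    Summable fun n => f n * cos (g n) :=
  hf.abs.of_norm_bounded fun n => by
    rw [Real.norm_eq_abs, abs_mul]
    exact mul_le_of_le_one_right (abs_nonneg _) (abs_cos_le_one _)

lemma sq_add_mul_sq_sub_two_mul_pos {w α β c : ℝ} (hw : 0 ≤ w) (hα : 0 < α) (hαβ : α < β)
    (hc : c ≤ 1) : 0 < w ^ 2 + (α * β) ^ 2 - 2 * α ^ 2 * w * c := by
  nlinarith [sq_nonneg (w - α ^ 2), mul_le_mul_of_nonneg_left hc (by positivity : 0 ≤ α ^ 2 * w),
    mul_pos (pow_pos hα 2) (mul_pos (sub_pos.2 hαβ) (add_pos hα (hα.trans hαβ)))]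

lemma neg_inner_div_add_inner_div {E : Type*} [NormedAddCommGroup E] [InnerProductSpace ℝ E]
    (x y : E) :
    -inner ℝ (x - y) x / ‖x - y‖ ^ 2 + inner ℝ (y - x) y / ‖y - x‖ ^ 2 =
      (‖y‖ ^ 2 - ‖x‖ ^ 2) / ‖x - y‖ ^ 2 := by
  rw [norm_sub_rev y x, ← add_div, inner_sub_left, inner_sub_left, real_inner_comm x y,
    real_inner_self_eq_norm_sq, real_inner_self_eq_norm_sq]
  ring_nf

lemma EuclideanSpace.norm_sq_eq_of_ofLp_eq_polar {P : EuclideanSpace ℝ (Fin 2)} {r θ : ℝ}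
    (h : P.ofLp = ![r * cos θ, r * sin θ]) : ‖P‖ ^ 2 = r ^ 2 := by
  rw [EuclideanSpace.real_norm_sq_eq, Fin.sum_univ_two, h]
  simp only [Matrix.cons_val_zero, Matrix.cons_val_one]
  linear_combination r ^ 2 * sin_sq_add_cos_sq θ

/-- The `(m+1)`-st term of the series on the left of (i), with `r = r₁`. -/
noncomputable def robinTerm (a b r : ℝ) (m : ℕ) : ℝ :=
  (r ^ (2 * (m + 1)) - (a * b) ^ (2 * (m + 1)) * (r ^ (2 * (m + 1)))⁻¹) /
    (b ^ (2 * (m + 1)) - a ^ (2 * (m + 1)))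

/-- The `(m+1)`-st term of the series on the right of (i), with `s = r₂`, `r = r₁`,
`φ = θ₁ - θ₂`. -/
noncomputable def greenTerm (a b s r φ : ℝ) (m : ℕ) : ℝ :=
  (Acoef a b s (m + 1) * r ^ (m + 1) - Bcoef a b s (m + 1) * (r ^ (m + 1))⁻¹) *
    cos ((m + 1) * φ)

noncomputable def diffTerm (a b r₁ r₂ φ : ℝ) (m : ℕ) : ℝ :=
  robinTerm a b r₁ m - robinTerm a b r₂ m + (greenTerm a b r₂ r₁ φ m - greenTerm a b r₁ r₂ φ m)

lemma diffTerm_eq {a b r₁ r₂ : ℝ} (hr₁ : r₁ ≠ 0) (hr₂ : r₂ ≠ 0) (φ : ℝ) (m : ℕ) :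
    diffTerm a b r₁ r₂ φ m =
      (r₁ ^ (2 * (m + 1)) - r₂ ^ (2 * (m + 1))) *
        (((r₁ * r₂) ^ (m + 1)) ^ 2 + (a ^ (m + 1) * b ^ (m + 1)) ^ 2 -
          2 * (a ^ (m + 1)) ^ 2 * (r₁ * r₂) ^ (m + 1) * cos ((m + 1) * φ)) /
        (((r₁ * r₂) ^ (m + 1)) ^ 2 * ((b ^ (m + 1)) ^ 2 - (a ^ (m + 1)) ^ 2)) := by
  have hsq : ∀ t : ℝ, t ^ (2 * (m + 1)) = (t ^ (m + 1)) ^ 2 := fun t => by ring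
  have hsq' : ∀ t : ℝ, (t ^ 2) ^ (m + 1) = (t ^ (m + 1)) ^ 2 := fun t => by ring
  have hx : r₁ ^ (m + 1) ≠ 0 := pow_ne_zero _ hr₁
  have hy : r₂ ^ (m + 1) ≠ 0 := pow_ne_zero _ hr₂
  simp only [diffTerm, robinTerm, greenTerm, Acoef, Bcoef, hsq, hsq', div_pow, mul_pow]
  generalize r₁ ^ (m + 1) = x at hx ⊢
  generalize r₂ ^ (m + 1) = y at hy ⊢
  generalize (b ^ (m + 1)) ^ 2 - (a ^ (m + 1)) ^ 2 = d
  rcases eq_or_ne d 0 with rfl | hd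
  · simp
  · field_simp
    ring

section Annulus

variable {a b : ℝ}

lemma summable_pow_div_sq_pow_sub_sq_pow (ha : 0 < a) (hab : a < b) {x : ℝ} (hx : 0 < x)
    (hxb : x < b ^ 2) :
    Summable fun m : ℕ => x ^ (m + 1) / ((b ^ 2) ^ (m + 1) - (a ^ 2) ^ (m + 1)) :=
  summable_pow_div_pow_sub_pow ((abs_of_pos hx).trans_lt hxb) (sq_nonneg a)
    (pow_lt_pow_left₀ hab ha.le two_ne_zero)

lemma summable_robinTerm (ha : 0 < a) (hab : a < b) {r : ℝ} (hr : r ∈ Set.Ioo a b) :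
    Summable (robinTerm a b r) := by
  obtain ⟨har, hrb⟩ := hr
  have hr0 : 0 < r := ha.trans har
  have hb : 0 < b := ha.trans hab
  have hgeom := fun x => summable_pow_div_sq_pow_sub_sq_pow (x := x) ha hab
  refine ((hgeom (r ^ 2) (by positivity) (by nlinarith)).sub
    (hgeom ((a * b / r) ^ 2) (by positivity) ?_)).congr fun m => ?_
  · rw [div_pow, div_lt_iff₀ (by positivity)]
    nlinarith [mul_pos hr0 ha, mul_pos (mul_pos hr0 ha) (pow_pos hb 2)]
  · simp only [robinTerm]
    ring

lemma summable_greenTerm (ha : 0 < a) (hab : a < b) {s r : ℝ} (hs : s ∈ Set.Ioo a b)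
    (hr : r ∈ Set.Ioo a b) (φ : ℝ) : Summable (greenTerm a b s r φ) := by
  obtain ⟨has, hsb⟩ := hs
  obtain ⟨har, hrb⟩ := hr
  have hs0 : 0 < s := ha.trans has
  have hr0 : 0 < r := ha.trans har
  have hb : 0 < b := ha.trans hab
  have hgeom := fun x => summable_pow_div_sq_pow_sub_sq_pow (x := x) ha hab
  have h₁ := hgeom (s * r) (by positivity) (by nlinarith)
  have h₂ := hgeom (a ^ 2 * r / s) (by positivity) (by
    rw [div_lt_iff₀ hs0]
    nlinarith [mul_lt_mul_of_pos_left (mul_lt_mul'' has hrb ha.le hr0.le) ha,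
      mul_lt_mul_of_pos_right hab (mul_pos hs0 hb)])
  have h₃ := hgeom (a ^ 2 * b ^ 2 / (s * r)) (by positivity) (by
    rw [div_lt_iff₀ (by positivity)]
    nlinarith [mul_lt_mul_of_pos_right (mul_lt_mul'' has har ha.le ha.le) (pow_pos hb 2)])
  have h₄ := hgeom (a ^ 2 * s / r) (by positivity) (by
    rw [div_lt_iff₀ hr0]
    nlinarith [mul_lt_mul_of_pos_left (mul_lt_mul'' har hsb ha.le hs0.le) ha,
      mul_lt_mul_of_pos_right hab (mul_pos hr0 hb)])
  exact Summable.mul_cos ((((h₁.sub h₂).sub h₃).add h₄).congr fun m => by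
    simp only [Acoef, Bcoef]
    ring) _

lemma sub_mul_diffTerm_pos (ha : 0 < a) (hab : a < b) {r₁ r₂ : ℝ} (hr₁ : 0 < r₁) (hr₂ : 0 < r₂)
    (hne : r₁ ≠ r₂) (φ : ℝ) (m : ℕ) : 0 < (r₁ - r₂) * diffTerm a b r₁ r₂ φ m := by
  have hpow : a ^ (m + 1) < b ^ (m + 1) := pow_lt_pow_left₀ hab ha.le (by omega)
  have hQ := sq_add_mul_sq_sub_two_mul_pos (w := (r₁ * r₂) ^ (m + 1)) (by positivity)
    (pow_pos ha _) hpow (cos_le_one ((m + 1) * φ))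
  have hden : 0 < (b ^ (m + 1)) ^ 2 - (a ^ (m + 1)) ^ 2 :=
    sub_pos.2 (pow_lt_pow_left₀ hpow (by positivity) two_ne_zero)
  rw [diffTerm_eq hr₁.ne' hr₂.ne', mul_div_assoc', ← mul_assoc]
  exact div_pos (mul_pos (sub_mul_pow_sub_pow_pos hr₁.le hr₂.le hne (by omega)) hQ)
    (mul_pos (by positivity) hden)

lemma tsum_diffTerm (ha : 0 < a) (hab : a < b) {r₁ r₂ : ℝ} (hr₁ : r₁ ∈ Set.Ioo a b)
    (hr₂ : r₂ ∈ Set.Ioo a b) (φ : ℝ) :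
    ∑' m, diffTerm a b r₁ r₂ φ m = ∑' m, robinTerm a b r₁ m - ∑' m, robinTerm a b r₂ m +
      (∑' m, greenTerm a b r₂ r₁ φ m - ∑' m, greenTerm a b r₁ r₂ φ m) := by
  rw [← Summable.tsum_sub (summable_robinTerm ha hab hr₁) (summable_robinTerm ha hab hr₂),
    ← Summable.tsum_sub (summable_greenTerm ha hab hr₂ hr₁ φ) (summable_greenTerm ha hab hr₁ hr₂ φ),
    ← Summable.tsum_add ((summable_robinTerm ha hab hr₁).sub (summable_robinTerm ha hab hr₂))
      ((summable_greenTerm ha hab hr₂ hr₁ φ).sub (summable_greenTerm ha hab hr₁ hr₂ φ))]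
  rfl

lemma sub_mul_tsum_diffTerm_pos (ha : 0 < a) (hab : a < b) {r₁ r₂ : ℝ} (hr₁ : r₁ ∈ Set.Ioo a b)
    (hr₂ : r₂ ∈ Set.Ioo a b) (hne : r₁ ≠ r₂) (φ : ℝ) :
    0 < (r₁ - r₂) * ∑' m, diffTerm a b r₁ r₂ φ m := by
  have hsum : Summable (diffTerm a b r₁ r₂ φ) :=
    ((summable_robinTerm ha hab hr₁).sub (summable_robinTerm ha hab hr₂)).add
      ((summable_greenTerm ha hab hr₂ hr₁ φ).sub (summable_greenTerm ha hab hr₁ hr₂ φ))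
  have hpos := sub_mul_diffTerm_pos ha hab (ha.trans hr₁.1) (ha.trans hr₂.1) hne φ
  rw [← tsum_mul_left]
  exact (hsum.mul_left _).tsum_pos (fun m => (hpos m).le) 0 (hpos 0)

end Annulus

theorem equal_radii_of_blowup_equations_general (a b : ℝ) (ha : 0 < a) (hab : a < b)
    (P₁ P₂ : EuclideanSpace ℝ (Fin 2)) (r₁ r₂ θ₁ θ₂ : ℝ)
    (hr₁ : r₁ ∈ Set.Ioo a b) (hr₂ : r₂ ∈ Set.Ioo a b)
    (hp₁ : P₁ = ![r₁ * Real.cos θ₁, r₁ * Real.sin θ₁])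
    (hp₂ : P₂ = ![r₂ * Real.cos θ₂, r₂ * Real.sin θ₂])
    (heq₁ : -B0 a b r₁ +
        ∑' m : ℕ, (r₁ ^ (2 * (m + 1)) - (a * b) ^ (2 * (m + 1)) * (r₁ ^ (2 * (m + 1)))⁻¹) /
          (b ^ (2 * (m + 1)) - a ^ (2 * (m + 1))) =
      -(inner ℝ (P₁ - P₂) P₁ : ℝ) / ‖P₁ - P₂‖ ^ 2 + B0 a b r₂ -
        ∑' m : ℕ, (Acoef a b r₂ (m + 1) * r₁ ^ (m + 1) -
            Bcoef a b r₂ (m + 1) * (r₁ ^ (m + 1))⁻¹) * Real.cos ((m + 1) * (θ₁ - θ₂)))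
    (heq₂ : -B0 a b r₂ +
        ∑' m : ℕ, (r₂ ^ (2 * (m + 1)) - (a * b) ^ (2 * (m + 1)) * (r₂ ^ (2 * (m + 1)))⁻¹) /
          (b ^ (2 * (m + 1)) - a ^ (2 * (m + 1))) =
      -(inner ℝ (P₂ - P₁) P₂ : ℝ) / ‖P₂ - P₁‖ ^ 2 + B0 a b r₁ -
        ∑' m : ℕ, (Acoef a b r₁ (m + 1) * r₂ ^ (m + 1) -
            Bcoef a b r₁ (m + 1) * (r₂ ^ (m + 1))⁻¹) * Real.cos ((m + 1) * (θ₁ - θ₂))) :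
    r₁ = r₂ := by
  change -B0 a b r₁ + ∑' m, robinTerm a b r₁ m = _ - ∑' m, greenTerm a b r₂ r₁ (θ₁ - θ₂) m at heq₁
  change -B0 a b r₂ + ∑' m, robinTerm a b r₂ m = _ - ∑' m, greenTerm a b r₁ r₂ (θ₁ - θ₂) m at heq₂
  have hsum : ∑' m, diffTerm a b r₁ r₂ (θ₁ - θ₂) m = (r₂ ^ 2 - r₁ ^ 2) / ‖P₁ - P₂‖ ^ 2 := by
    rw [tsum_diffTerm ha hab hr₁ hr₂, ← EuclideanSpace.norm_sq_eq_of_ofLp_eq_polar hp₁,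
      ← EuclideanSpace.norm_sq_eq_of_ofLp_eq_polar hp₂, ← neg_inner_div_add_inner_div]
    linear_combination heq₁ - heq₂
  by_contra hne
  have hpos := sub_mul_tsum_diffTerm_pos ha hab hr₁ hr₂ hne (θ₁ - θ₂)
  have hr : 0 < r₁ + r₂ := add_pos (ha.trans hr₁.1) (ha.trans hr₂.1)
  have hnonpos : (r₁ - r₂) * (r₂ ^ 2 - r₁ ^ 2) / ‖P₁ - P₂‖ ^ 2 ≤ 0 :=
    div_nonpos_of_nonpos_of_nonneg (by nlinarith [mul_nonneg (sq_nonneg (r₁ - r₂)) hr.le])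
      (by positivity)
  rw [hsum, mul_div_assoc'] at hpos
  linarith

/-- Let `0 < a < b` and let `P₁ ≠ P₂` be points of the annulus `{a < |x| < b}` with
polar coordinates `Pᵢ = (rᵢ cos θᵢ, rᵢ sin θᵢ)`.  If the two characterization equations
`(1/2)∇R_A(Pᵢ)·Pᵢ = ∇ₓG_A(Pᵢ, Pⱼ)·Pᵢ` (written out via Hickey's formula) hold, then
`r₁ = r₂`. -/
theorem equal_radii_of_blowup_equations (a b : ℝ) (ha : 0 < a) (hab : a < b)
    (P₁ P₂ : EuclideanSpace ℝ (Fin 2)) (r₁ r₂ θ₁ θ₂ : ℝ)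
    (hr₁ : r₁ ∈ Set.Ioo a b) (hr₂ : r₂ ∈ Set.Ioo a b)
    (hp₁ : P₁ = ![r₁ * Real.cos θ₁, r₁ * Real.sin θ₁])
    (hp₂ : P₂ = ![r₂ * Real.cos θ₂, r₂ * Real.sin θ₂])
    (hne : P₁ ≠ P₂)
    (heq₁ : -B0 a b r₁ +
        ∑' m : ℕ, (r₁ ^ (2 * (m + 1)) - (a * b) ^ (2 * (m + 1)) * (r₁ ^ (2 * (m + 1)))⁻¹) /
          (b ^ (2 * (m + 1)) - a ^ (2 * (m + 1))) =
      -(inner ℝ (P₁ - P₂) P₁ : ℝ) / ‖P₁ - P₂‖ ^ 2 + B0 a b r₂ -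
        ∑' m : ℕ, (Acoef a b r₂ (m + 1) * r₁ ^ (m + 1) -
            Bcoef a b r₂ (m + 1) * (r₁ ^ (m + 1))⁻¹) * Real.cos ((m + 1) * (θ₁ - θ₂)))
    (heq₂ : -B0 a b r₂ +
        ∑' m : ℕ, (r₂ ^ (2 * (m + 1)) - (a * b) ^ (2 * (m + 1)) * (r₂ ^ (2 * (m + 1)))⁻¹) /
          (b ^ (2 * (m + 1)) - a ^ (2 * (m + 1))) =
      -(inner ℝ (P₂ - P₁) P₂ : ℝ) / ‖P₂ - P₁‖ ^ 2 + B0 a b r₁ -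
        ∑' m : ℕ, (Acoef a b r₁ (m + 1) * r₂ ^ (m + 1) -
            Bcoef a b r₁ (m + 1) * (r₂ ^ (m + 1))⁻¹) * Real.cos ((m + 1) * (θ₁ - θ₂))) :
    r₁ = r₂ :=
  equal_radii_of_blowup_equations_general a b ha hab P₁ P₂ r₁ r₂ θ₁ θ₂ hr₁ hr₂ hp₁ hp₂ heq₁ heq₂
end

section
/- Let 0 < a < b. Then there exists a unique r₀ ∈ (a,b) such that 2 log(r₀/b)/log(a/b) − 1/2 = Σ_{m=1}^∞ ((−1)^m + 1)·(r₀^{2m} − (ab)^{2m} r₀^{−2m})/(b^{2m} − a^{2m}); moreover √(ab) < r₀ < a^{1/4} b^{3/4}. -/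
/-!
The defect `D(r) = 2 log(r/b)/log(a/b) - 1/2 - Σ(r)` is strictly decreasing on `(a, b)`: the
logarithmic part decreases because `log(a/b) < 0`, and after dividing numerator and denominator
by `b^{2m}` each term of the series is a nonnegative weight times `(r/b)^{2m} - (a/r)^{2m}`, which
increases with `r` (strictly for `m = 2`). Geometric majorants on compact subintervals make `Σ`
continuous. At `r = √(ab)` we have `a/r = r/b`, so every term vanishes and `D = 1/2`; at
`r = a^{1/4} b^{3/4}` the logarithmic part is `1/2`, so `D = -Σ < 0`. The intermediate value
theorem gives the zero `r₀`, and strict monotonicity its uniqueness.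
-/

open Real Set

noncomputable section

def blowupTerm (a b r : ℝ) (m : ℕ) : ℝ :=
  ((-1 : ℝ) ^ (m + 1) + 1) *
    (r ^ (2 * (m + 1)) - (a * b) ^ (2 * (m + 1)) * (r ^ (2 * (m + 1)))⁻¹) /
    (b ^ (2 * (m + 1)) - a ^ (2 * (m + 1)))

def blowupWeight (a b : ℝ) (m : ℕ) : ℝ :=
  ((-1 : ℝ) ^ (m + 1) + 1) / (1 - (a / b) ^ (2 * (m + 1)))

def blowupDefect (a b r : ℝ) : ℝ :=
  2 * log (r / b) / log (a / b) - 1 / 2 - ∑' m, blowupTerm a b r m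

end

section

variable {a b r s t : ℝ}

theorem blowupTerm_eq_weight_mul (hb : b ≠ 0) (hr : r ≠ 0) (m : ℕ) :
    blowupTerm a b r m =
      blowupWeight a b m * ((r / b) ^ (2 * (m + 1)) - (a / r) ^ (2 * (m + 1))) := by
  have hbn : b ^ (2 * (m + 1)) ≠ 0 := pow_ne_zero _ hb
  rw [blowupTerm, blowupWeight, div_pow, div_pow, div_pow, mul_pow,
    ← mul_div_mul_right _ (b ^ (2 * (m + 1)) - a ^ (2 * (m + 1))) (inv_ne_zero hbn)]
  field_simp

theorem neg_one_pow_add_one_nonneg (k : ℕ) : 0 ≤ (-1 : ℝ) ^ k + 1 := by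
  rcases neg_one_pow_eq_or ℝ k with h | h <;> simp [h]

theorem one_sub_div_pow_pos (ha : 0 ≤ a) (hab : a < b) {n : ℕ} (hn : n ≠ 0) :
    0 < 1 - (a / b) ^ n :=
  sub_pos.2 <| pow_lt_one₀ (div_nonneg ha (ha.trans hab.le))
    ((div_lt_one (ha.trans_lt hab)).2 hab) hn

theorem blowupWeight_nonneg (ha : 0 ≤ a) (hab : a < b) (m : ℕ) : 0 ≤ blowupWeight a b m :=
  div_nonneg (neg_one_pow_add_one_nonneg _) (one_sub_div_pow_pos ha hab (by positivity)).le

theorem blowupWeight_one_pos (ha : 0 ≤ a) (hab : a < b) : 0 < blowupWeight a b 1 :=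
  div_pos (by norm_num) (one_sub_div_pow_pos ha hab (by norm_num))

theorem blowupWeight_le (ha : 0 ≤ a) (hab : a < b) (m : ℕ) :
    blowupWeight a b m ≤ 2 / (1 - (a / b) ^ 2) := by
  have hq : 0 ≤ a / b := div_nonneg ha (ha.trans hab.le)
  have hq1 : a / b ≤ 1 := (div_le_one (ha.trans_lt hab)).2 hab.le
  have hcoeff : (-1 : ℝ) ^ (m + 1) + 1 ≤ 2 := by
    rcases neg_one_pow_eq_or ℝ (m + 1) with h | h <;> norm_num [h]
  have hpow : (a / b) ^ (2 * (m + 1)) ≤ (a / b) ^ 2 := pow_le_pow_of_le_one hq hq1 (by omega)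
  exact div_le_div₀ zero_le_two hcoeff (one_sub_div_pow_pos ha hab two_ne_zero) (by linarith)

theorem strictMonoOn_div_pow_sub_div_pow (ha : 0 < a) (hb : 0 < b) {n : ℕ} (hn : n ≠ 0) :
    StrictMonoOn (fun r => (r / b) ^ n - (a / r) ^ n) (Ioi 0) := by
  intro x hx y _ hxy
  have hx : 0 < x := hx
  have hy : 0 < y := hx.trans hxy
  have hup : (x / b) ^ n < (y / b) ^ n :=
    pow_lt_pow_left₀ (div_lt_div_of_pos_right hxy hb) (by positivity) hn
  have hdown : (a / y) ^ n < (a / x) ^ n :=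
    pow_lt_pow_left₀ (div_lt_div_of_pos_left ha hx hxy) (by positivity) hn
  dsimp only
  linarith

theorem blowupTerm_monotoneOn (ha : 0 < a) (hab : a < b) (m : ℕ) :
    MonotoneOn (blowupTerm a b · m) (Ioi 0) := by
  intro x hx y hy hxy
  have hb : b ≠ 0 := (ha.trans hab).ne'
  simp only [blowupTerm_eq_weight_mul hb (ne_of_gt hx), blowupTerm_eq_weight_mul hb (ne_of_gt hy)]
  exact mul_le_mul_of_nonneg_left
    ((strictMonoOn_div_pow_sub_div_pow ha (ha.trans hab) (by positivity)).monotoneOn hx hy hxy)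
    (blowupWeight_nonneg ha.le hab m)

theorem blowupTerm_one_strictMonoOn (ha : 0 < a) (hab : a < b) :
    StrictMonoOn (blowupTerm a b · 1) (Ioi 0) := by
  intro x hx y hy hxy
  have hb : b ≠ 0 := (ha.trans hab).ne'
  simp only [blowupTerm_eq_weight_mul hb (ne_of_gt hx), blowupTerm_eq_weight_mul hb (ne_of_gt hy)]
  exact mul_lt_mul_of_pos_left
    (strictMonoOn_div_pow_sub_div_pow ha (ha.trans hab) (by positivity) hx hy hxy)
    (blowupWeight_one_pos ha.le hab)

theorem blowupTerm_sqrt_mul (ha : 0 < a) (hab : a < b) (m : ℕ) :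
    blowupTerm a b √(a * b) m = 0 := by
  have hb : 0 < b := ha.trans hab
  have hs : 0 < √(a * b) := by positivity
  have hratio : a / √(a * b) = √(a * b) / b := by
    rw [div_eq_div_iff hs.ne' hb.ne', mul_self_sqrt (by positivity)]
  rw [blowupTerm_eq_weight_mul hb.ne' hs.ne', hratio, sub_self, mul_zero]

theorem abs_blowupTerm_le (ha : 0 < a) (hab : a < b) (has : a < s) (hsr : s ≤ r) (hrt : r ≤ t)
    (m : ℕ) :
    |blowupTerm a b r m| ≤
      2 / (1 - (a / b) ^ 2) * ((t / b) ^ (2 * (m + 1)) + (a / s) ^ (2 * (m + 1))) := by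
  have hb : 0 < b := ha.trans hab
  have hs : 0 < s := ha.trans has
  have hr : 0 < r := hs.trans_le hsr
  have hprofile : |(r / b) ^ (2 * (m + 1)) - (a / r) ^ (2 * (m + 1))| ≤
      (t / b) ^ (2 * (m + 1)) + (a / s) ^ (2 * (m + 1)) := by
    have hup : (r / b) ^ (2 * (m + 1)) ≤ (t / b) ^ (2 * (m + 1)) := by gcongr
    have hdown : (a / r) ^ (2 * (m + 1)) ≤ (a / s) ^ (2 * (m + 1)) := by gcongr
    rw [abs_sub_le_iff]
    constructor <;> nlinarith [pow_pos (div_pos hr hb) (2 * (m + 1)),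
      pow_pos (div_pos ha hr) (2 * (m + 1))]
  have hweight := blowupWeight_nonneg ha.le hab m
  rw [blowupTerm_eq_weight_mul hb.ne' hr.ne', abs_mul, abs_of_nonneg hweight]
  exact mul_le_mul (blowupWeight_le ha.le hab m) hprofile (abs_nonneg _)
    (hweight.trans (blowupWeight_le ha.le hab m))

theorem summable_pow_two_mul_succ {q : ℝ} (hq : |q| < 1) :
    Summable fun m : ℕ => q ^ (2 * (m + 1)) :=
  ((summable_geometric_of_lt_one (sq_nonneg q) ((sq_lt_one_iff_abs_lt_one q).2 hq)).mul_left
    (q ^ 2)).congr fun m => by ring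

theorem summable_blowupMajorant (ha : 0 < a) (has : a < s) (hst : s ≤ t) (htb : t < b) :
    Summable fun m : ℕ =>
      2 / (1 - (a / b) ^ 2) * ((t / b) ^ (2 * (m + 1)) + (a / s) ^ (2 * (m + 1))) := by
  have hs : 0 < s := ha.trans has
  have hb : 0 < b := hs.trans_le hst |>.trans htb
  have htb' : |t / b| < 1 := by
    rw [abs_of_pos (div_pos (hs.trans_le hst) hb)]; exact (div_lt_one hb).2 htb
  have has' : |a / s| < 1 := by
    rw [abs_of_pos (div_pos ha hs)]; exact (div_lt_one hs).2 has
  exact ((summable_pow_two_mul_succ htb').add (summable_pow_two_mul_succ has')).mul_left _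

theorem summable_blowupTerm (ha : 0 < a) (hr : r ∈ Ioo a b) : Summable (blowupTerm a b r) :=
  (summable_blowupMajorant ha hr.1 le_rfl hr.2).of_norm_bounded
    (abs_blowupTerm_le ha (hr.1.trans hr.2) hr.1 le_rfl le_rfl)

theorem continuousOn_tsum_blowupTerm (ha : 0 < a) (has : a < s) (hst : s ≤ t) (htb : t < b) :
    ContinuousOn (fun r => ∑' m, blowupTerm a b r m) (Icc s t) := by
  refine continuousOn_tsum (fun m => ?_) (summable_blowupMajorant ha has hst htb)
    fun m r hr => abs_blowupTerm_le ha (has.trans_le hst |>.trans htb) has hr.1 hr.2 m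
  have hne : ∀ r ∈ Icc s t, r ^ (2 * (m + 1)) ≠ 0 := fun r hr =>
    pow_ne_zero _ (ha.trans (has.trans_le hr.1)).ne'
  unfold blowupTerm
  fun_prop (disch := assumption)

theorem strictMonoOn_tsum_blowupTerm (ha : 0 < a) (hab : a < b) :
    StrictMonoOn (fun r => ∑' m, blowupTerm a b r m) (Ioo a b) := by
  intro x hx y hy hxy
  have hx0 : x ∈ Ioi 0 := ha.trans hx.1
  have hy0 : y ∈ Ioi 0 := ha.trans hy.1
  exact (summable_blowupTerm ha hx).tsum_lt_tsum
    (fun m => blowupTerm_monotoneOn ha hab m hx0 hy0 hxy.le)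
    (blowupTerm_one_strictMonoOn ha hab hx0 hy0 hxy) (summable_blowupTerm ha hy)

theorem log_div_neg_of_lt (ha : 0 < a) (hab : a < b) : log (a / b) < 0 :=
  log_neg (div_pos ha (ha.trans hab)) ((div_lt_one (ha.trans hab)).2 hab)

theorem log_sqrt_mul_div (ha : 0 < a) (hb : 0 < b) : log (√(a * b) / b) = log (a / b) / 2 := by
  rw [log_div (by positivity) hb.ne', log_sqrt (by positivity), log_mul ha.ne' hb.ne',
    log_div ha.ne' hb.ne']
  ring

theorem log_rpow_mul_rpow_div (ha : 0 < a) (hb : 0 < b) :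
    log (a ^ ((1 : ℝ) / 4) * b ^ ((3 : ℝ) / 4) / b) = log (a / b) / 4 := by
  rw [log_div (by positivity) hb.ne', log_mul (by positivity) (by positivity), log_rpow ha,
    log_rpow hb, log_div ha.ne' hb.ne']
  ring

theorem lt_sqrt_mul_lt_rpow_mul_rpow_lt (ha : 0 < a) (hab : a < b) :
    a < √(a * b) ∧ √(a * b) < a ^ ((1 : ℝ) / 4) * b ^ ((3 : ℝ) / 4) ∧
      a ^ ((1 : ℝ) / 4) * b ^ ((3 : ℝ) / 4) < b := by
  have hb : 0 < b := ha.trans hab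
  have hL := log_div_neg_of_lt ha hab
  have of_log_lt : ∀ {x y : ℝ}, 0 < x → 0 < y → log (x / b) < log (y / b) → x < y :=
    fun hx hy h => (div_lt_div_iff_of_pos_right hb).1
      ((log_lt_log_iff (div_pos hx hb) (div_pos hy hb)).1 h)
  have hs : 0 < √(a * b) := by positivity
  have ht : 0 < a ^ ((1 : ℝ) / 4) * b ^ ((3 : ℝ) / 4) := by positivity
  refine ⟨of_log_lt ha hs ?_, of_log_lt hs ht ?_, of_log_lt ht hb ?_⟩
  · rw [log_sqrt_mul_div ha hb]; linarith
  · rw [log_sqrt_mul_div ha hb, log_rpow_mul_rpow_div ha hb]; linarith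
  · rw [log_rpow_mul_rpow_div ha hb, div_self hb.ne', log_one]; linarith

theorem strictAntiOn_blowupDefect (ha : 0 < a) (hab : a < b) :
    StrictAntiOn (blowupDefect a b) (Ioo a b) := by
  intro x hx y hy hxy
  have hb : 0 < b := ha.trans hab
  have hlog : 2 * log (y / b) / log (a / b) < 2 * log (x / b) / log (a / b) := by
    have : log (x / b) < log (y / b) := log_lt_log (div_pos (ha.trans hx.1) hb) (by gcongr)
    exact div_lt_div_of_neg_of_lt (log_div_neg_of_lt ha hab) (by linarith)
  have hsum := strictMonoOn_tsum_blowupTerm ha hab hx hy hxy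
  simp only [blowupDefect]
  linarith

theorem continuousOn_blowupDefect (ha : 0 < a) (has : a < s) (hst : s ≤ t) (htb : t < b) :
    ContinuousOn (blowupDefect a b) (Icc s t) := by
  have hlog : ContinuousOn (fun r => log (r / b)) (Icc s t) :=
    (continuousOn_id.div_const b).log fun r hr =>
      div_ne_zero (ha.trans (has.trans_le hr.1)).ne' (ha.trans (has.trans_le hst) |>.trans htb).ne'
  exact (((continuousOn_const.mul hlog).div_const _).sub continuousOn_const).sub
    (continuousOn_tsum_blowupTerm ha has hst htb)

theorem blowupDefect_sqrt_mul (ha : 0 < a) (hab : a < b) : blowupDefect a b √(a * b) = 1 / 2 := by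
  have hL := (log_div_neg_of_lt ha hab).ne
  simp only [blowupDefect, blowupTerm_sqrt_mul ha hab, tsum_zero,
    log_sqrt_mul_div ha (ha.trans hab)]
  field_simp
  ring

theorem blowupDefect_rpow_mul_rpow_neg (ha : 0 < a) (hab : a < b) :
    blowupDefect a b (a ^ ((1 : ℝ) / 4) * b ^ ((3 : ℝ) / 4)) < 0 := by
  obtain ⟨has, hst, htb⟩ := lt_sqrt_mul_lt_rpow_mul_rpow_lt ha hab
  have hs0 : √(a * b) ∈ Ioi 0 := ha.trans has
  have ht0 : a ^ ((1 : ℝ) / 4) * b ^ ((3 : ℝ) / 4) ∈ Ioi 0 := ha.trans (has.trans hst)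
  have hsum : 0 < ∑' m, blowupTerm a b (a ^ ((1 : ℝ) / 4) * b ^ ((3 : ℝ) / 4)) m := by
    refine Summable.tsum_pos (summable_blowupTerm ha ⟨has.trans hst, htb⟩) (fun m => ?_) 1 ?_
    · simpa only [blowupTerm_sqrt_mul ha hab] using
        blowupTerm_monotoneOn ha hab m hs0 ht0 hst.le
    · simpa only [blowupTerm_sqrt_mul ha hab] using
        blowupTerm_one_strictMonoOn ha hab hs0 ht0 hst
  have hL := (log_div_neg_of_lt ha hab).ne
  have hlog : 2 * log (a ^ ((1 : ℝ) / 4) * b ^ ((3 : ℝ) / 4) / b) / log (a / b) = 1 / 2 := by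
    rw [log_rpow_mul_rpow_div ha (ha.trans hab)]
    field_simp
    ring
  rw [blowupDefect, hlog]
  linarith

theorem blowupDefect_eq_zero_iff :
    blowupDefect a b r = 0 ↔
      2 * log (r / b) / log (a / b) - 1 / 2 = ∑' m, blowupTerm a b r m :=
  sub_eq_zero

end

/-- Let `0 < a < b`.  There exists a unique `r₀ ∈ (a, b)` such that
`2 log(r₀/b)/log(a/b) - 1/2
  = Σ_{m≥1} ((-1)^m + 1)(r₀^{2m} - (ab)^{2m} r₀^{-2m})/(b^{2m} - a^{2m})`;
moreover `√(ab) < r₀ < a^{1/4} b^{3/4}`. -/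
theorem exists_unique_blowup_modulus (a b : ℝ) (ha : 0 < a) (hab : a < b) :
    ∃ r₀ ∈ Set.Ioo a b,
      (2 * Real.log (r₀ / b) / Real.log (a / b) - 1 / 2 =
        ∑' m : ℕ, ((-1 : ℝ) ^ (m + 1) + 1) *
          (r₀ ^ (2 * (m + 1)) - (a * b) ^ (2 * (m + 1)) * (r₀ ^ (2 * (m + 1)))⁻¹) /
          (b ^ (2 * (m + 1)) - a ^ (2 * (m + 1)))) ∧
      Real.sqrt (a * b) < r₀ ∧ r₀ < a ^ ((1 : ℝ) / 4) * b ^ ((3 : ℝ) / 4) ∧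
      ∀ r ∈ Set.Ioo a b,
        (2 * Real.log (r / b) / Real.log (a / b) - 1 / 2 =
          ∑' m : ℕ, ((-1 : ℝ) ^ (m + 1) + 1) *
            (r ^ (2 * (m + 1)) - (a * b) ^ (2 * (m + 1)) * (r ^ (2 * (m + 1)))⁻¹) /
            (b ^ (2 * (m + 1)) - a ^ (2 * (m + 1)))) → r = r₀ := by
  obtain ⟨has, hst, htb⟩ := lt_sqrt_mul_lt_rpow_mul_rpow_lt ha hab
  have hs := blowupDefect_sqrt_mul ha hab
  have ht := blowupDefect_rpow_mul_rpow_neg ha hab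
  obtain ⟨r₀, hr₀, hzero⟩ := intermediate_value_Icc' hst.le
    (continuousOn_blowupDefect ha has hst.le htb) ⟨ht.le, by rw [hs]; norm_num⟩
  have hr₀s : √(a * b) < r₀ := hr₀.1.lt_of_ne (by rintro rfl; norm_num [hs] at hzero)
  have hr₀t : r₀ < a ^ ((1 : ℝ) / 4) * b ^ ((3 : ℝ) / 4) :=
    hr₀.2.lt_of_ne (by rintro rfl; linarith)
  have hr₀I : r₀ ∈ Ioo a b := ⟨has.trans hr₀s, hr₀t.trans htb⟩
  refine ⟨r₀, hr₀I, blowupDefect_eq_zero_iff.1 hzero, hr₀s, hr₀t, fun r hr hr_eq => ?_⟩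
  exact (strictAntiOn_blowupDefect ha hab).injOn hr hr₀I
    ((blowupDefect_eq_zero_iff.2 hr_eq).trans hzero.symm)
end
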